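/- Let H⁰ = {(0,y,z,0,v) : y,z,v ∈ ℝ} ⊆ G̃. Then H⁰ is a normal subgroup of G̃, and for every g = (x₀,y₀,z₀,t₀,u₀) ∈ G̃ and every h = (0,h₂,h₃,0,h₅) ∈ H⁰ one has the explicit conjugation formula g ⋆ h ⋆ g⁻¹ = (0, h₂, h₃+h₂x₀, 0, h₅ + h₂(t₀ − x₀²/2) − h₃x₀). -/
import Mathlib


noncomputable section

/-- The underlying set `ℝ⁵` of the group `G̃`. -/
abbrev G5 : Type := ℝ × ℝ × ℝ × ℝ × ℝ

/-- Multiplication on `G̃`. -/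
def gtmul (g₁ g₂ : G5) : G5 :=
  (g₁.1 + g₂.1, g₁.2.1 + g₂.2.1, g₁.2.2.1 + g₂.2.2.1 - g₁.2.1 * g₂.1,
   g₁.2.2.2.1 + g₂.2.2.2.1,
   g₁.2.2.2.2 + g₂.2.2.2.2 + g₁.2.2.1 * g₂.1 - (1 / 2) * g₁.2.1 * g₂.1 ^ 2
     + g₁.2.2.2.1 * g₂.2.1)

/-- Inversion in `G̃`. -/
def gtinv (g : G5) : G5 :=
  (-g.1, -g.2.1, -g.2.2.1 - g.2.1 * g.1, -g.2.2.2.1,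
   -g.2.2.2.2 + g.2.2.1 * g.1 + (1 / 2) * g.2.1 * g.1 ^ 2 + g.2.2.2.1 * g.2.1)

/-- The subgroup `H⁰ = {(0,y,z,0,v) : y,z,v ∈ ℝ} ⊆ G̃`. -/
def H0 : Set G5 := {g : G5 | g.1 = 0 ∧ g.2.2.2.1 = 0}

/-- `H⁰` is a normal subgroup of `G̃`, with the explicit conjugation formula
`g ⋆ (0,h₂,h₃,0,h₅) ⋆ g⁻¹ = (0, h₂, h₃+h₂x₀, 0, h₅+h₂(t₀−x₀²/2)−h₃x₀)`. -/
theorem stmt12 :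
    (((0 : ℝ), (0 : ℝ), (0 : ℝ), (0 : ℝ), (0 : ℝ)) ∈ H0) ∧
    (∀ h ∈ H0, ∀ h' ∈ H0, gtmul h h' ∈ H0) ∧
    (∀ h ∈ H0, gtinv h ∈ H0) ∧
    (∀ h : G5, gtmul h (gtinv h) = ((0 : ℝ), (0 : ℝ), (0 : ℝ), (0 : ℝ), (0 : ℝ)) ∧
      gtmul (gtinv h) h = ((0 : ℝ), (0 : ℝ), (0 : ℝ), (0 : ℝ), (0 : ℝ))) ∧
    (∀ g : G5, ∀ h ∈ H0, gtmul (gtmul g h) (gtinv g) ∈ H0) ∧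
    (∀ x₀ y₀ z₀ t₀ u₀ h₂ h₃ h₅ : ℝ,
      gtmul (gtmul (x₀, y₀, z₀, t₀, u₀) ((0 : ℝ), h₂, h₃, (0 : ℝ), h₅))
          (gtinv (x₀, y₀, z₀, t₀, u₀)) =
        ((0 : ℝ), h₂, h₃ + h₂ * x₀, (0 : ℝ),
          h₅ + h₂ * (t₀ - x₀ ^ 2 / 2) - h₃ * x₀)) := by
  refine ⟨⟨rfl, rfl⟩, ?_, ?_, ?_, ?_, ?_⟩
  · rintro h ⟨h1, h4⟩ h' ⟨h1', h4'⟩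
    exact ⟨by simp [gtmul, h1, h1', h4, h4'], by simp [gtmul, h1, h1', h4, h4']⟩
  · rintro h ⟨h1, h4⟩
    exact ⟨by simp [gtinv, h1, h4], by simp [gtinv, h1, h4]⟩
  · intro h
    constructor <;> simp [gtmul, gtinv, Prod.ext_iff] <;> and_intros <;> first | ring | trivial
  · rintro g h ⟨h1, h4⟩
    exact ⟨by simp [gtmul, gtinv, h1, h4], by simp [gtmul, gtinv, h1, h4]⟩
  · intro x₀ y₀ z₀ t₀ u₀ h₂ h₃ h₅
    simp [gtmul, gtinv, Prod.ext_iff]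
    constructor <;> ring


end
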